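/- Let A be a unique factorization domain, let ξ ∈ K̄ be such that 1, ξ and ξ² are linearly independent over K, let 0 < c₁ < 6^{−1/2} and let X ≥ 1 be such that the set S(X) of primitive triples x = (x₀,x₁,x₂) ∈ A³ (i.e. with gcd(x₀,x₁,x₂) = 1) satisfying |x₀| ≤ X and L(x) ≤ c₁·X^{−1/γ} is nonempty. Then ℓ(X) := inf{L(x) : x ∈ S(X)} is strictly positive. -/

import Mathlib

/-!
If `ℓ(X) = 0`, there are triples `x, y ∈ S(X)` with `0 < L(y) < L(x)` and both errors tiny.
The minors `x₀ yᵢ - xᵢ y₀` are then elements of `A` of absolute value `< 1`, hence zero, so the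
primitive triples `x` and `y` are proportional by a unit `c` of `A`. But then `L(y) = |c| L(x) ≥ L(x)`.
Positivity of `L` on primitive triples is where the linear independence of `1, ξ, ξ²` enters.
-/

section Triples

variable {A : Type*} [CommRing A]

def IsPrimitiveTriple (x : Fin 3 → A) : Prop :=
  ∀ d : A, d ∣ x 0 → d ∣ x 1 → d ∣ x 2 → IsUnit d

theorem IsPrimitiveTriple.dvd_of_forall_dvd_mul [GCDMonoid A] {x : Fin 3 → A} {a b : A}
    (hx : IsPrimitiveTriple x) (h : ∀ i, a ∣ b * x i) : a ∣ b := by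
  have h12 : a ∣ b * gcd (x 1) (x 2) := (dvd_gcd (h 1) (h 2)).trans (gcd_mul_left' b _ _).dvd
  have h012 : a ∣ b * gcd (x 0) (gcd (x 1) (x 2)) :=
    (dvd_gcd (h 0) h12).trans (gcd_mul_left' b _ _).dvd
  have hunit : IsUnit (gcd (x 0) (gcd (x 1) (x 2))) :=
    hx _ (gcd_dvd_left _ _) ((gcd_dvd_right _ _).trans (gcd_dvd_left _ _))
      ((gcd_dvd_right _ _).trans (gcd_dvd_right _ _))
  exact hunit.dvd_mul_right.mp h012

theorem IsPrimitiveTriple.exists_isUnit_eq_smul [IsDomain A] [GCDMonoid A] {x y : Fin 3 → A}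
    (hx : IsPrimitiveTriple x) (hy : IsPrimitiveTriple y) (hx₀ : x 0 ≠ 0)
    (h₁ : x 0 * y 1 = x 1 * y 0) (h₂ : x 0 * y 2 = x 2 * y 0) :
    ∃ c : A, IsUnit c ∧ y = c • x := by
  have hdvd : ∀ i, x 0 * y i = x i * y 0 := by
    intro i
    fin_cases i
    exacts [rfl, h₁, h₂]
  obtain ⟨c, hc⟩ : x 0 ∣ y 0 :=
    hx.dvd_of_forall_dvd_mul fun i => ⟨y i, by rw [hdvd, mul_comm]⟩
  have hyx : y = c • x := by
    funext i
    apply mul_left_cancel₀ hx₀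
    rw [hdvd, hc, Pi.smul_apply, smul_eq_mul]
    ring
  refine ⟨c, hy c ?_ ?_ ?_, hyx⟩ <;> exact ⟨_, by rw [hyx, Pi.smul_apply, smul_eq_mul]⟩

end Triples

theorem AbsoluteValue.abv_mul_sub_mul_le {L : Type*} [CommRing L] (abv : AbsoluteValue L ℝ)
    (u v p q θ : L) :
    abv (u * q - p * v) ≤ abv v * abv (u * θ - p) + abv u * abv (v * θ - q) :=
  calc abv (u * q - p * v) = abv (v * (u * θ - p) - u * (v * θ - q)) := by ring_nf
    _ ≤ abv (v * (u * θ - p)) + abv (u * (v * θ - q)) := abv.sub_le_add _ _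
    _ = abv v * abv (u * θ - p) + abv u * abv (v * θ - q) := by rw [abv.map_mul, abv.map_mul]

section Approximation

variable {A L : Type*} [CommRing A] [Field L] (g : A →+* L) (abv : AbsoluteValue L ℝ) (ξ : L)

/-- The paper's `L(x)`, with `A` embedded in `L` by `g`. -/
def approxError (x : Fin 3 → A) : ℝ :=
  max (abv (g (x 0) * ξ - g (x 1))) (abv (g (x 0) * ξ ^ 2 - g (x 2)))

variable {g abv ξ}

theorem approxError_nonneg (x : Fin 3 → A) : 0 ≤ approxError g abv ξ x :=
  (abv.nonneg _).trans (le_max_left _ _)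

theorem approxError_smul (c : A) (x : Fin 3 → A) :
    approxError g abv ξ (c • x) = abv (g c) * approxError g abv ξ x := by
  have h (k : ℕ) (i : Fin 3) :
      g ((c • x) 0) * ξ ^ k - g ((c • x) i) = g c * (g (x 0) * ξ ^ k - g (x i)) := by
    simp only [Pi.smul_apply, smul_eq_mul, map_mul]
    ring
  have h₁ := h 1 1
  rw [pow_one] at h₁
  rw [approxError, approxError, h₁, h 2 2, abv.map_mul, abv.map_mul,
    mul_max_of_nonneg _ _ (abv.nonneg _)]

variable (hg : ∀ a : A, a ≠ 0 → 1 ≤ abv (g a))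
include hg

theorem eq_zero_of_abv_lt_one {a : A} (ha : abv (g a) < 1) : a = 0 := by
  by_contra h
  exact (hg a h).not_gt ha

theorem mul_sub_mul_eq_zero_of_abv_le {a b c d : A} {θ : L} {X e e' : ℝ}
    (ha : abv (g a) ≤ X) (hc : abv (g c) ≤ X)
    (hab : abv (g a * θ - g b) ≤ e) (hcd : abv (g c * θ - g d) ≤ e')
    (h : X * (e + e') < 1) : a * d - b * c = 0 := by
  apply eq_zero_of_abv_lt_one hg
  have hX : 0 ≤ X := (abv.nonneg _).trans ha
  calc abv (g (a * d - b * c)) = abv (g a * g d - g b * g c) := by rw [map_sub, map_mul, map_mul]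
    _ ≤ abv (g c) * abv (g a * θ - g b) + abv (g a) * abv (g c * θ - g d) :=
      abv.abv_mul_sub_mul_le _ _ _ _ θ
    _ ≤ X * e + X * e' := by gcongr
    _ < 1 := by linarith

theorem IsPrimitiveTriple.ne_zero_of_approxError_lt_one {x : Fin 3 → A}
    (hx : IsPrimitiveTriple x) (hL : approxError g abv ξ x < 1) : x 0 ≠ 0 := by
  have := g.domain_nontrivial
  intro h₀
  simp only [approxError, h₀, map_zero, zero_mul, zero_sub, abv.map_neg, max_lt_iff] at hL
  exact (hx 0 (by rw [h₀]) (by rw [eq_zero_of_abv_lt_one hg hL.1])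
    (by rw [eq_zero_of_abv_lt_one hg hL.2])).ne_zero rfl

theorem IsPrimitiveTriple.approxError_pos (hirr : ∀ a b : A, a ≠ 0 → g a * ξ ≠ g b)
    {x : Fin 3 → A} (hx : IsPrimitiveTriple x) : 0 < approxError g abv ξ x := by
  refine (approxError_nonneg x).lt_of_ne fun h => ?_
  apply hirr _ (x 1) (hx.ne_zero_of_approxError_lt_one hg (h ▸ zero_lt_one))
  rw [← sub_eq_zero, ← abv.eq_zero]
  exact le_antisymm (h ▸ le_max_left _ _) (abv.nonneg _)

theorem IsPrimitiveTriple.approxError_le [IsDomain A] [GCDMonoid A] {x y : Fin 3 → A} {X : ℝ}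
    (hx : IsPrimitiveTriple x) (hy : IsPrimitiveTriple y)
    (hx₀ : abv (g (x 0)) ≤ X) (hy₀ : abv (g (y 0)) ≤ X)
    (hxy : X * (approxError g abv ξ x + approxError g abv ξ y) < 1)
    (hx_lt_one : approxError g abv ξ x < 1) : approxError g abv ξ x ≤ approxError g abv ξ y := by
  have h₁ : x 0 * y 1 = x 1 * y 0 := sub_eq_zero.mp <|
    mul_sub_mul_eq_zero_of_abv_le hg hx₀ hy₀ (le_max_left _ _) (le_max_left _ _) hxy
  have h₂ : x 0 * y 2 = x 2 * y 0 := sub_eq_zero.mp <|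
    mul_sub_mul_eq_zero_of_abv_le hg hx₀ hy₀ (le_max_right _ _) (le_max_right _ _) hxy
  obtain ⟨c, hc, rfl⟩ :=
    hx.exists_isUnit_eq_smul hy (hx.ne_zero_of_approxError_lt_one hg hx_lt_one) h₁ h₂
  rw [approxError_smul]
  exact le_mul_of_one_le_left (approxError_nonneg x) (hg c hc.ne_zero)

theorem sInf_approxError_pos [IsDomain A] [GCDMonoid A]
    (hirr : ∀ a b : A, a ≠ 0 → g a * ξ ≠ g b) {S : Set (Fin 3 → A)} {X : ℝ}
    (hS : ∀ x ∈ S, IsPrimitiveTriple x ∧ abv (g (x 0)) ≤ X) (hne : S.Nonempty) :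
    0 < sInf (approxError g abv ξ '' S) := by
  by_contra! h
  have hX : 0 ≤ X := by
    obtain ⟨x, hx⟩ := hne
    exact (abv.nonneg _).trans (hS x hx).2
  set ε : ℝ := (2 * X + 2)⁻¹
  have hε : 0 < ε := by positivity
  have hXε : X * (2 * ε) < 1 := by
    rw [← mul_assoc, mul_inv_lt_iff₀ (by positivity)]
    linarith
  obtain ⟨_, ⟨x, hxS, rfl⟩, hxε⟩ := exists_lt_of_csInf_lt (hne.image _) (h.trans_lt hε)
  obtain ⟨_, ⟨y, hyS, rfl⟩, hyx⟩ := exists_lt_of_csInf_lt (hne.image _)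
    (h.trans_lt ((hS x hxS).1.approxError_pos hg hirr))
  apply hyx.not_ge
  refine (hS x hxS).1.approxError_le hg (hS y hyS).1 (hS x hxS).2 (hS y hyS).2 ?_ ?_
  · calc X * (approxError g abv ξ x + approxError g abv ξ y) ≤ X * (2 * ε) := by
          gcongr; linarith
      _ < 1 := hXε
  · calc approxError g abv ξ x < ε := hxε
      _ ≤ 1 := inv_le_one_of_one_le₀ (by linarith)

end Approximation

theorem ellX_pos
    {A : Type*} [CommRing A] [IsDomain A] [UniqueFactorizationMonoid A]
    {K : Type*} [Field K] [Algebra A K]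
    {L : Type*} [Field L]
    (f : K →+* L)
    (abv : AbsoluteValue L ℝ)
    (habv_A : ∀ a : A, a ≠ 0 → 1 ≤ abv (f (algebraMap A K a)))
    (ξ : L)
    (hξ : ∀ c₀ c₁ c₂ : K, f c₀ + f c₁ * ξ + f c₂ * ξ ^ 2 = 0 →
      c₀ = 0 ∧ c₁ = 0 ∧ c₂ = 0)
    (c₁ X : ℝ)
    (S : Set (Fin 3 → A))
    (hS : S = {x : Fin 3 → A |
      (∀ d : A, d ∣ x 0 → d ∣ x 1 → d ∣ x 2 → IsUnit d) ∧
      abv (f (algebraMap A K (x 0))) ≤ X ∧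
      max (abv (f (algebraMap A K (x 0)) * ξ - f (algebraMap A K (x 1))))
          (abv (f (algebraMap A K (x 0)) * ξ ^ 2 - f (algebraMap A K (x 2))))
        ≤ c₁ * X ^ (-1 / Real.goldenRatio)})
    (hS_ne : S.Nonempty) :
    0 < sInf ((fun x : Fin 3 → A =>
      max (abv (f (algebraMap A K (x 0)) * ξ - f (algebraMap A K (x 1))))
          (abv (f (algebraMap A K (x 0)) * ξ ^ 2 - f (algebraMap A K (x 2))))) '' S) := by
  let := UniqueFactorizationMonoid.toGCDMonoid A
  set g := f.comp (algebraMap A K)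
  have hirr (a b : A) (ha : a ≠ 0) : g a * ξ ≠ g b := by
    intro h
    have hlin : f (-algebraMap A K b) + f (algebraMap A K a) * ξ + f 0 * ξ ^ 2 = 0 := by
      rw [map_neg, map_zero, ← RingHom.comp_apply, ← RingHom.comp_apply, h]
      ring
    have hfa : algebraMap A K a = 0 := (hξ _ _ _ hlin).2.1
    exact (habv_A a ha).not_gt (by simp [hfa])
  subst hS
  exact sInf_approxError_pos habv_A hirr (fun x hx => ⟨hx.1, hx.2.1⟩) hS_ne
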